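/- arXiv:math/0201276 — 2 statements merged into one kernel-verified Lean document; each statement's English description precedes it below -/
import Mathlib

section
/- Let A be a Hopf algebra over a field k and σ, σ̃ two convolution-invertible unital 2-cocycles on A. Then ρ := σ̃ * σ⁻¹ (convolution product) is a convolution-invertible unital 2-cocycle for the cocycle-deformed Hopf algebra A_σ, and (A_σ)_ρ = A_{σ̃} as Hopf algebras. -/
/-!
All computations take place in Mathlib's convolution monoids `WithConv (C →ₗ[k] B)`. Writing `ι`
for the unit map `k → B`, the deformed product is the conjugate `μ_σ = ι σ * μ * ι σ⁻¹`. As `Δ`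
and `ε` are algebra maps and `μ` is a coalgebra map, `μ_σ` is again a coalgebra map, so
precomposition with `μ_σ ⊗ 1` and `1 ⊗ μ_σ` is multiplicative; moreover
`φ ∘ (μ_σ ⊗ 1) = σ₁₂ * φ ∘ (μ ⊗ 1) * σ₁₂⁻¹` and `φ ∘ (1 ⊗ μ_σ) = σ₂₃ * φ ∘ (1 ⊗ μ) * σ₂₃⁻¹`.
The cocycle condition reads `σ₁₂ * σ ∘ (μ ⊗ 1) = σ₂₃ * σ ∘ (1 ⊗ μ)`, and for `ρ = σ̃ σ⁻¹` these
identities turn the condition for `ρ` on `A_σ` into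
`σ̃₁₂ σ̃(μ ⊗ 1) (σ₁₂ σ(μ ⊗ 1))⁻¹ = σ̃₂₃ σ̃(1 ⊗ μ) (σ₂₃ σ(1 ⊗ μ))⁻¹`, the cocycle condition for `σ̃`
times the inverse of the one for `σ`. Deforming twice is conjugating twice, by `ρ σ = σ̃`.
-/

open TensorProduct

universe u

variable {k : Type u} [Field k]

/-- Convolution product of two functionals on a coalgebra. -/
noncomputable def conv {C : Type u} [AddCommGroup C] [Module k C] [Coalgebra k C]
    (f g : C →ₗ[k] k) : C →ₗ[k] k :=
  LinearMap.mul' k k ∘ₗ TensorProduct.map f g ∘ₗ Coalgebra.comul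

/-- `x ↦ φ(x₁) • μ(x₂)`. -/
noncomputable def convL {C A : Type u} [AddCommGroup C] [Module k C] [Coalgebra k C]
    [Ring A] [Algebra k A] (φ : C →ₗ[k] k) (μ : C →ₗ[k] A) : C →ₗ[k] A :=
  (TensorProduct.lid k A).toLinearMap ∘ₗ TensorProduct.map φ μ ∘ₗ Coalgebra.comul

/-- `x ↦ φ(x₂) • μ(x₁)`. -/
noncomputable def convR {C A : Type u} [AddCommGroup C] [Module k C] [Coalgebra k C]
    [Ring A] [Algebra k A] (μ : C →ₗ[k] A) (φ : C →ₗ[k] k) : C →ₗ[k] A :=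
  (TensorProduct.rid k A).toLinearMap ∘ₗ TensorProduct.map μ φ ∘ₗ Coalgebra.comul

/-- The deformed multiplication `x ⊗ y ↦ σ(x₁,y₁) x₂y₂ σ'(x₃,y₃)`. -/
noncomputable def deform {A : Type u} [Ring A] [HopfAlgebra k A]
    (σ : A ⊗[k] A →ₗ[k] k) (μ : A ⊗[k] A →ₗ[k] A) (σ' : A ⊗[k] A →ₗ[k] k) :
    A ⊗[k] A →ₗ[k] A :=
  convR (convL σ μ) σ'

/-- The 2-cocycle condition `σ(x₁,y₁)σ(μ(x₂,y₂),z) = σ(y₁,z₁)σ(x,μ(y₂,z₂))`, stated for a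
(possibly deformed) multiplication `μ` on `A`. -/
noncomputable def IsCocycle {A : Type u} [Ring A] [HopfAlgebra k A]
    (μ : A ⊗[k] A →ₗ[k] A) (σ : A ⊗[k] A →ₗ[k] k) : Prop :=
  conv (LinearMap.mul' k k ∘ₗ TensorProduct.map σ Coalgebra.counit)
      (σ ∘ₗ TensorProduct.map μ LinearMap.id) =
    conv ((LinearMap.mul' k k ∘ₗ TensorProduct.map Coalgebra.counit σ) ∘ₗ
        (TensorProduct.assoc k A A A).toLinearMap)
      (σ ∘ₗ TensorProduct.map LinearMap.id μ ∘ₗ (TensorProduct.assoc k A A A).toLinearMap)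

open Coalgebra WithConv

namespace AlgHom

variable {R C A B : Type*} [CommSemiring R] [AddCommMonoid C] [Module R C] [Coalgebra R C]
  [Semiring A] [Algebra R A] [Semiring B] [Algebra R B]

noncomputable def convPostcomp (h : A →ₐ[R] B) : WithConv (C →ₗ[R] A) →* WithConv (C →ₗ[R] B) where
  toFun f := toConv (h.toLinearMap ∘ₗ f.ofConv)
  map_one' := by ext; simp
  map_mul' f g := by rw [LinearMap.algHom_comp_convMul_distrib]

lemma ofConv_convPostcomp (h : A →ₐ[R] B) (f : WithConv (C →ₗ[R] A)) :
    (h.convPostcomp f).ofConv = h.toLinearMap ∘ₗ f.ofConv := rfl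

@[simp] lemma convPostcomp_apply (h : A →ₐ[R] B) (f : WithConv (C →ₗ[R] A)) (c : C) :
    h.convPostcomp f c = h (f c) := rfl

lemma convPostcomp_convPostcomp_ofId (h : A →ₐ[R] B) (f : WithConv (C →ₗ[R] R)) :
    h.convPostcomp ((Algebra.ofId R A).convPostcomp f) = (Algebra.ofId R B).convPostcomp f := by
  rw [Subsingleton.elim (Algebra.ofId R B) (h.comp (Algebra.ofId R A))]; rfl

end AlgHom

namespace CoalgHom

variable {R C D A : Type*} [CommSemiring R] [AddCommMonoid C] [Module R C] [Coalgebra R C]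
  [AddCommMonoid D] [Module R D] [Coalgebra R D] [Semiring A] [Algebra R A]

noncomputable def convPrecomp (P : D →ₗc[R] C) : WithConv (C →ₗ[R] A) →* WithConv (D →ₗ[R] A) where
  toFun f := toConv (f.ofConv ∘ₗ P.toLinearMap)
  map_one' := by ext; simp [LinearMap.convOne_def]
  map_mul' f g := by rw [LinearMap.convMul_comp_coalgHom_distrib]

@[simp] lemma convPrecomp_apply (P : D →ₗc[R] C) (f : WithConv (C →ₗ[R] A)) (d : D) :
    P.convPrecomp f d = f (P d) := rfl

lemma convPrecomp_comp {E : Type*} [AddCommMonoid E] [Module R E] [Coalgebra R E]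
    (P : D →ₗc[R] C) (Q : E →ₗc[R] D) (f : WithConv (C →ₗ[R] A)) :
    (P.comp Q).convPrecomp f = Q.convPrecomp (P.convPrecomp f) := rfl

end CoalgHom

section Scalars

variable {R C B : Type*} [CommSemiring R] [AddCommMonoid C] [Module R C] [Coalgebra R C]
  [Semiring B] [Algebra R B]

lemma LinearMap.toConv_comp_convPostcomp_ofId_mul (φ : B →ₗ[R] R)
    (ψ : WithConv (C →ₗ[R] R)) (F : WithConv (C →ₗ[R] B)) :
    toConv (φ ∘ₗ ((Algebra.ofId R B).convPostcomp ψ * F).ofConv) = ψ * toConv (φ ∘ₗ F.ofConv) := by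
  have key : φ ∘ₗ LinearMap.mul' R B ∘ₗ
      TensorProduct.map (Algebra.ofId R B).toLinearMap LinearMap.id =
      LinearMap.mul' R R ∘ₗ TensorProduct.map LinearMap.id φ := by
    ext; simp
  ext c
  simpa [TensorProduct.map_map, AlgHom.ofConv_convPostcomp] using
    LinearMap.congr_fun key (TensorProduct.map ψ.ofConv F.ofConv (comul c))

lemma LinearMap.toConv_comp_mul_convPostcomp_ofId (φ : B →ₗ[R] R)
    (ψ : WithConv (C →ₗ[R] R)) (F : WithConv (C →ₗ[R] B)) :
    toConv (φ ∘ₗ (F * (Algebra.ofId R B).convPostcomp ψ).ofConv) = toConv (φ ∘ₗ F.ofConv) * ψ := by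
  have key : φ ∘ₗ LinearMap.mul' R B ∘ₗ
      TensorProduct.map LinearMap.id (Algebra.ofId R B).toLinearMap =
      LinearMap.mul' R R ∘ₗ TensorProduct.map φ LinearMap.id := by
    ext; simp [mul_comm]
  ext c
  simpa [TensorProduct.map_map, AlgHom.ofConv_convPostcomp] using
    LinearMap.congr_fun key (TensorProduct.map F.ofConv ψ.ofConv (comul c))

end Scalars

section Conj

variable {R C A B : Type*} [CommSemiring R] [AddCommMonoid C] [Module R C] [Coalgebra R C]
  [Semiring A] [Algebra R A] [Semiring B] [Algebra R B]

/-- For `F = μ` this is the deformed product `x ⊗ y ↦ σ(x₁,y₁) x₂y₂ σ⁻¹(x₃,y₃)`. -/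
noncomputable def convConj (σ : (WithConv (C →ₗ[R] R))ˣ) (F : WithConv (C →ₗ[R] A)) :
    WithConv (C →ₗ[R] A) :=
  ↑(Units.map (Algebra.ofId R A).convPostcomp σ) * F *
    ↑(Units.map (Algebra.ofId R A).convPostcomp σ)⁻¹

lemma convConj_mul_convConj (σ : (WithConv (C →ₗ[R] R))ˣ) (F G : WithConv (C →ₗ[R] A)) :
    convConj σ F * convConj σ G = convConj σ (F * G) := by
  simp only [convConj, mul_assoc, Units.inv_mul_cancel_left]

lemma convConj_one (σ : (WithConv (C →ₗ[R] R))ˣ) : convConj σ (1 : WithConv (C →ₗ[R] A)) = 1 := by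
  rw [convConj, mul_one, Units.mul_inv]

lemma convConj_convConj (σ τ : (WithConv (C →ₗ[R] R))ˣ) (F : WithConv (C →ₗ[R] A)) :
    convConj τ (convConj σ F) = convConj (τ * σ) F := by
  simp only [convConj, map_mul, mul_inv_rev, Units.val_mul, mul_assoc]

lemma AlgHom.convPostcomp_convConj (h : A →ₐ[R] B) (σ : (WithConv (C →ₗ[R] R))ˣ)
    (F : WithConv (C →ₗ[R] A)) : h.convPostcomp (convConj σ F) = convConj σ (h.convPostcomp F) := by
  simp only [convConj, map_mul, Units.coe_map, Units.coe_map_inv,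
    AlgHom.convPostcomp_convPostcomp_ofId]

lemma toConv_map_comp_comul (f : C →ₗ[R] A) (g : C →ₗ[R] B) :
    toConv (TensorProduct.map f g ∘ₗ comul) =
      Algebra.TensorProduct.includeLeft.convPostcomp (toConv f) *
        Algebra.TensorProduct.includeRight.convPostcomp (toConv g) := by
  have key : LinearMap.mul' R (A ⊗[R] B) ∘ₗ
      TensorProduct.map (Algebra.TensorProduct.includeLeft (S := R)).toLinearMap
        Algebra.TensorProduct.includeRight.toLinearMap = LinearMap.id := by
    ext; simp
  ext c
  simpa [TensorProduct.map_map, AlgHom.ofConv_convPostcomp] using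
    (LinearMap.congr_fun key (TensorProduct.map f g (comul c))).symm

end Conj

section ConjCoalgHom

variable {R C A : Type*} [CommSemiring R] [AddCommMonoid C] [Module R C] [Coalgebra R C]
  [Semiring A] [Bialgebra R A]

lemma toConv_counit : toConv (counit : C →ₗ[R] R) = 1 := by
  ext; simp

noncomputable def CoalgHom.convConj (F : C →ₗc[R] A) (σ : (WithConv (C →ₗ[R] R))ˣ) :
    C →ₗc[R] A where
  toLinearMap := (_root_.convConj σ (toConv F.toLinearMap)).ofConv
  counit_comp := by
    apply toConv_injective
    change (Bialgebra.counitAlgHom R A).convPostcomp _ = _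
    rw [AlgHom.convPostcomp_convConj]
    change _root_.convConj σ (toConv (counit ∘ₗ F.toLinearMap)) = _
    rw [F.counit_comp, toConv_counit, convConj_one]
  map_comp_comul := by
    apply toConv_injective
    rw [toConv_map_comp_comul, toConv_ofConv, AlgHom.convPostcomp_convConj,
      AlgHom.convPostcomp_convConj, convConj_mul_convConj, ← toConv_map_comp_comul,
      F.map_comp_comul]
    change _ = (Bialgebra.comulAlgHom R A).convPostcomp _
    rw [AlgHom.convPostcomp_convConj]
    rfl

lemma CoalgHom.convConj_toLinearMap (F : C →ₗc[R] A) (σ : (WithConv (C →ₗ[R] R))ˣ) :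
    (F.convConj σ).toLinearMap = (_root_.convConj σ (toConv F.toLinearMap)).ofConv := rfl

end ConjCoalgHom

namespace Coalgebra.TensorProduct

variable (R C D : Type*) [CommRing R] [AddCommGroup C] [Module R C] [Coalgebra R C]
  [AddCommGroup D] [Module R D] [Coalgebra R D]

noncomputable def fst : C ⊗[R] D →ₗc[R] C :=
  (Coalgebra.TensorProduct.rid R R C : C ⊗[R] R →ₗc[R] C).comp
    (CoalgHom.lTensor C (counitCoalgHom R D))

noncomputable def snd : C ⊗[R] D →ₗc[R] D :=
  (Coalgebra.TensorProduct.lid R D : R ⊗[R] D →ₗc[R] D).comp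
    (CoalgHom.rTensor D (counitCoalgHom R C))

variable {R C D}

@[simp] lemma fst_tmul (c : C) (d : D) : fst R C D (c ⊗ₜ d) = counit (R := R) d • c := rfl

@[simp] lemma snd_tmul (c : C) (d : D) : snd R C D (c ⊗ₜ d) = counit (R := R) c • d := rfl

end Coalgebra.TensorProduct

section Whiskering

open Coalgebra.TensorProduct

variable {R C A D : Type*} [CommRing R] [AddCommGroup C] [Module R C] [Coalgebra R C]
  [Ring A] [Algebra R A] [Ring D] [Bialgebra R D]

lemma toConv_map_convPostcomp_ofId_one (ψ : WithConv (C →ₗ[R] R)) :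
    toConv (TensorProduct.map ((Algebra.ofId R A).convPostcomp ψ).ofConv
        (1 : WithConv (D →ₗ[R] D)).ofConv) =
      (Algebra.ofId R (A ⊗[R] D)).convPostcomp ((fst R C D).convPrecomp ψ) := by
  ext c d
  simp [LinearMap.convOne_def, Algebra.algebraMap_eq_smul_one, Algebra.TensorProduct.one_def,
    TensorProduct.smul_tmul', smul_smul, mul_comm]

lemma toConv_map_one_convPostcomp_ofId (ψ : WithConv (C →ₗ[R] R)) :
    toConv (TensorProduct.map (1 : WithConv (D →ₗ[R] D)).ofConv
        ((Algebra.ofId R A).convPostcomp ψ).ofConv) =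
      (Algebra.ofId R (D ⊗[R] A)).convPostcomp ((snd R D C).convPrecomp ψ) := by
  ext c d
  simp [LinearMap.convOne_def, Algebra.algebraMap_eq_smul_one, Algebra.TensorProduct.one_def,
    TensorProduct.smul_tmul', smul_smul, mul_comm]

end Whiskering

section DeformedWhiskering

open Coalgebra.TensorProduct

variable {R C A D : Type*} [CommRing R] [AddCommGroup C] [Module R C] [Coalgebra R C]
  [Ring A] [Bialgebra R A] [Ring D] [Bialgebra R D]

lemma CoalgHom.convPrecomp_rTensor_convConj (F : C →ₗc[R] A) (σ : (WithConv (C →ₗ[R] R))ˣ)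
    (φ : WithConv (A ⊗[R] D →ₗ[R] R)) :
    (CoalgHom.rTensor D (F.convConj σ)).convPrecomp φ =
      (fst R C D).convPrecomp ↑σ * (CoalgHom.rTensor D F).convPrecomp φ *
        (fst R C D).convPrecomp (A := R) ↑σ⁻¹ := by
  have hmap : toConv (TensorProduct.map (F.convConj σ).toLinearMap LinearMap.id) =
      (Algebra.ofId R (A ⊗[R] D)).convPostcomp ((fst R C D).convPrecomp ↑σ) *
        toConv (TensorProduct.map F.toLinearMap LinearMap.id) *
        (Algebra.ofId R (A ⊗[R] D)).convPostcomp ((fst R C D).convPrecomp (A := R) ↑σ⁻¹) := by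
    rw [← toConv_map_convPostcomp_ofId_one, ← toConv_map_convPostcomp_ofId_one,
      TensorProduct.map_convMul_map (h := toConv F.toLinearMap) (k := toConv LinearMap.id),
      TensorProduct.map_convMul_map]
    simp only [CoalgHom.convConj_toLinearMap, _root_.convConj, Units.coe_map, Units.coe_map_inv,
      one_mul, mul_one, ofConv_toConv]
  change toConv (φ.ofConv ∘ₗ
    (toConv (TensorProduct.map (F.convConj σ).toLinearMap LinearMap.id)).ofConv) = _
  rw [hmap, LinearMap.toConv_comp_mul_convPostcomp_ofId,
    LinearMap.toConv_comp_convPostcomp_ofId_mul]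
  rfl

lemma CoalgHom.convPrecomp_lTensor_convConj (F : C →ₗc[R] A) (σ : (WithConv (C →ₗ[R] R))ˣ)
    (φ : WithConv (D ⊗[R] A →ₗ[R] R)) :
    (CoalgHom.lTensor D (F.convConj σ)).convPrecomp φ =
      (snd R D C).convPrecomp ↑σ * (CoalgHom.lTensor D F).convPrecomp φ *
        (snd R D C).convPrecomp (A := R) ↑σ⁻¹ := by
  have hmap : toConv (TensorProduct.map LinearMap.id (F.convConj σ).toLinearMap) =
      (Algebra.ofId R (D ⊗[R] A)).convPostcomp ((snd R D C).convPrecomp ↑σ) *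
        toConv (TensorProduct.map LinearMap.id F.toLinearMap) *
        (Algebra.ofId R (D ⊗[R] A)).convPostcomp ((snd R D C).convPrecomp (A := R) ↑σ⁻¹) := by
    rw [← toConv_map_one_convPostcomp_ofId, ← toConv_map_one_convPostcomp_ofId,
      TensorProduct.map_convMul_map (h := toConv LinearMap.id) (k := toConv F.toLinearMap),
      TensorProduct.map_convMul_map]
    simp only [CoalgHom.convConj_toLinearMap, _root_.convConj, Units.coe_map, Units.coe_map_inv,
      one_mul, mul_one, ofConv_toConv]
  change toConv (φ.ofConv ∘ₗ
    (toConv (TensorProduct.map LinearMap.id (F.convConj σ).toLinearMap)).ofConv) = _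
  rw [hmap, LinearMap.toConv_comp_mul_convPostcomp_ofId,
    LinearMap.toConv_comp_convPostcomp_ofId_mul]
  rfl

end DeformedWhiskering

/-- Applied with `p, q : σ ↦ σ₁₂, σ₂₃`, with `l, r` precomposition by `μ ⊗ 1` and `1 ⊗ μ`, and
with `lσ, rσ` precomposition by `μ_s ⊗ 1` and `1 ⊗ μ_s`. -/
lemma cocycle_mul_inv_of_conj {M N : Type*} [Monoid M] [Monoid N] (p l q r lσ rσ : M →* N)
    (s t : Mˣ) (hl : ∀ φ, lσ φ = p s * l φ * p ↑s⁻¹) (hr : ∀ φ, rσ φ = q s * r φ * q ↑s⁻¹)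
    (hs : p s * l s = q s * r s) (ht : p t * l t = q t * r t) :
    p ↑(t * s⁻¹) * lσ ↑(t * s⁻¹) = q ↑(t * s⁻¹) * rσ ↑(t * s⁻¹) := by
  have hs' : Units.map p s * Units.map l s = Units.map q s * Units.map r s := Units.ext hs
  have hinv : l ↑s⁻¹ * p ↑s⁻¹ = r ↑s⁻¹ * q ↑s⁻¹ := by
    simpa using congrArg (fun u : Nˣ ↦ (↑u⁻¹ : N)) hs'
  have cancel (f : M →* N) : f ↑s⁻¹ * f s = 1 := by rw [← map_mul, Units.inv_mul, map_one]
  calc p ↑(t * s⁻¹) * lσ ↑(t * s⁻¹)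
      = p t * (p ↑s⁻¹ * p s) * l t * (l ↑s⁻¹ * p ↑s⁻¹) := by
        simp only [hl, Units.val_mul, map_mul, mul_assoc]
    _ = q t * (q ↑s⁻¹ * q s) * r t * (r ↑s⁻¹ * q ↑s⁻¹) := by
        rw [cancel, cancel, mul_one, mul_one, ht, hinv]
    _ = q ↑(t * s⁻¹) * rσ ↑(t * s⁻¹) := by
        simp only [hr, Units.val_mul, map_mul, mul_assoc]
section Functionals

variable {C : Type u} [AddCommGroup C] [Module k C] [Coalgebra k C]

lemma toConv_conv (f g : C →ₗ[k] k) : toConv (conv f g) = toConv f * toConv g := rfl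

lemma conv_eq_counit_iff (f g : C →ₗ[k] k) :
    conv f g = counit ↔ toConv f * toConv g = 1 := by
  rw [← toConv_conv, ← toConv_counit, toConv_injective.eq_iff]

noncomputable def convUnit (f g : C →ₗ[k] k)
    (h : conv f g = counit ∧ conv g f = counit) : (WithConv (C →ₗ[k] k))ˣ where
  val := toConv f
  inv := toConv g
  val_inv := (conv_eq_counit_iff f g).1 h.1
  inv_val := (conv_eq_counit_iff g f).1 h.2

end Functionals

lemma conv_apply_one {B : Type u} [Ring B] [Bialgebra k B] (f g : B →ₗ[k] k) :
    conv f g 1 = f 1 * g 1 := by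
  simp [conv, Algebra.TensorProduct.one_def]

lemma apply_one_eq_one_of_conv_eq_counit {B : Type u} [Ring B] [Bialgebra k B] {f g : B →ₗ[k] k}
    (h : conv f g = counit) (hf : f 1 = 1) : g 1 = 1 := by
  simpa [conv_apply_one, hf] using LinearMap.congr_fun h 1

section Deformation

variable {C A : Type u} [AddCommGroup C] [Module k C] [Coalgebra k C] [Ring A] [Algebra k A]

lemma toConv_convL (φ : C →ₗ[k] k) (μ : C →ₗ[k] A) :
    toConv (convL φ μ) = (Algebra.ofId k A).convPostcomp (toConv φ) * toConv μ := by
  have key : LinearMap.mul' k A ∘ₗ TensorProduct.map (Algebra.ofId k A).toLinearMap LinearMap.id =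
      (TensorProduct.lid k A).toLinearMap := by
    ext; simp [Algebra.smul_def]
  ext c
  simpa [convL, TensorProduct.map_map, AlgHom.ofConv_convPostcomp] using
    (LinearMap.congr_fun key (TensorProduct.map φ μ (comul c))).symm

lemma toConv_convR (μ : C →ₗ[k] A) (φ : C →ₗ[k] k) :
    toConv (convR μ φ) = toConv μ * (Algebra.ofId k A).convPostcomp (toConv φ) := by
  have key : LinearMap.mul' k A ∘ₗ TensorProduct.map LinearMap.id (Algebra.ofId k A).toLinearMap =
      (TensorProduct.rid k A).toLinearMap := by
    ext; simp [Algebra.smul_def]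
  ext c
  simpa [convR, TensorProduct.map_map, AlgHom.ofConv_convPostcomp] using
    (LinearMap.congr_fun key (TensorProduct.map μ φ (comul c))).symm

end Deformation

section Hopf

open Coalgebra.TensorProduct

variable {A : Type u} [Ring A] [HopfAlgebra k A]

lemma deform_eq_convConj (μ : A ⊗[k] A →ₗ[k] A) (σ : (WithConv (A ⊗[k] A →ₗ[k] k))ˣ) :
    deform (σ : WithConv (A ⊗[k] A →ₗ[k] k)).ofConv μ
        (↑σ⁻¹ : WithConv (A ⊗[k] A →ₗ[k] k)).ofConv = (convConj σ (toConv μ)).ofConv := by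
  rw [deform, ← ofConv_toConv (convR _ _), toConv_convR, toConv_convL]
  rfl

lemma isCocycle_iff (μ : A ⊗[k] A →ₗc[k] A) (σ : WithConv (A ⊗[k] A →ₗ[k] k)) :
    IsCocycle μ.toLinearMap σ.ofConv ↔
      (fst k (A ⊗[k] A) A).convPrecomp σ * (CoalgHom.rTensor A μ).convPrecomp σ =
        ((snd k A (A ⊗[k] A)).comp
            (Coalgebra.TensorProduct.assoc k k A A A).toCoalgHom).convPrecomp σ *
          ((CoalgHom.lTensor A μ).comp
            (Coalgebra.TensorProduct.assoc k k A A A).toCoalgHom).convPrecomp σ := by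
  have hfst : toConv (LinearMap.mul' k k ∘ₗ TensorProduct.map σ.ofConv counit) =
      (fst k (A ⊗[k] A) A).convPrecomp σ := by
    ext; simp [mul_comm]
  have hsnd : toConv ((LinearMap.mul' k k ∘ₗ TensorProduct.map counit σ.ofConv) ∘ₗ
      (TensorProduct.assoc k A A A).toLinearMap) =
      ((snd k A (A ⊗[k] A)).comp
        (Coalgebra.TensorProduct.assoc k k A A A).toCoalgHom).convPrecomp σ := by
    ext; simp
  rw [IsCocycle, ← toConv_injective.eq_iff, toConv_conv, toConv_conv, hfst, hsnd]
  rfl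

end Hopf

theorem cocycle_quotient_is_cocycle_for_deformation {A : Type u} [Ring A] [HopfAlgebra k A]
    (σ σinv σt σtinv : A ⊗[k] A →ₗ[k] k)
    (hσinv : conv σ σinv = Coalgebra.counit ∧ conv σinv σ = Coalgebra.counit)
    (hσtinv : conv σt σtinv = Coalgebra.counit ∧ conv σtinv σt = Coalgebra.counit)
    (hσ1 : σ (1 ⊗ₜ[k] 1) = 1) (hσt1 : σt (1 ⊗ₜ[k] 1) = 1)
    (hσ : IsCocycle (LinearMap.mul' k A) σ) (hσt : IsCocycle (LinearMap.mul' k A) σt) :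
    IsCocycle (deform σ (LinearMap.mul' k A) σinv) (conv σt σinv) ∧
    (conv σt σinv) (1 ⊗ₜ[k] 1) = 1 ∧
    ∃ ρinv : A ⊗[k] A →ₗ[k] k,
      conv (conv σt σinv) ρinv = Coalgebra.counit ∧
      conv ρinv (conv σt σinv) = Coalgebra.counit ∧
      deform (conv σt σinv) (deform σ (LinearMap.mul' k A) σinv) ρinv =
        deform σt (LinearMap.mul' k A) σtinv := by
  set S := convUnit σ σinv hσinv
  set T := convUnit σt σtinv hσtinv
  set μ := Bialgebra.mulCoalgHom k A
  have hμ : deform σ (LinearMap.mul' k A) σinv = (μ.convConj S).toLinearMap :=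
    deform_eq_convConj _ S
  have hρ : conv σt σinv = (↑(T * S⁻¹) : WithConv (A ⊗[k] A →ₗ[k] k)).ofConv := rfl
  refine ⟨?_, ?_, (↑(T * S⁻¹)⁻¹ : WithConv (A ⊗[k] A →ₗ[k] k)).ofConv, ?_, ?_, ?_⟩
  · rw [hμ, hρ, isCocycle_iff]
    refine cocycle_mul_inv_of_conj _ _ _ _ _ _ S T
      (CoalgHom.convPrecomp_rTensor_convConj μ S) (fun φ ↦ ?_)
      ((isCocycle_iff μ S).1 hσ) ((isCocycle_iff μ T).1 hσt)
    simp only [CoalgHom.convPrecomp_comp, CoalgHom.convPrecomp_lTensor_convConj, map_mul]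
  · rw [← Algebra.TensorProduct.one_def] at hσ1 hσt1 ⊢
    rw [conv_apply_one, hσt1, apply_one_eq_one_of_conv_eq_counit hσinv.1 hσ1, one_mul]
  · rw [hρ, conv_eq_counit_iff, toConv_ofConv, toConv_ofConv]
    exact Units.mul_inv _
  · rw [hρ, conv_eq_counit_iff, toConv_ofConv, toConv_ofConv]
    exact Units.inv_mul _
  · rw [hμ, hρ, CoalgHom.convConj_toLinearMap, deform_eq_convConj, toConv_ofConv,
      convConj_convConj, inv_mul_cancel_right]
    exact (deform_eq_convConj _ T).symm
end

section
/- Let k be a field, q ∈ k of order N ≥ 2, and A a k-algebra with elements a_i, e, and an invertible element g such that a_i e = α e a_i + λ(1 - q⁻¹) e' for scalars α, λ ∈ k and an element e' with e' e = β e e' where α = β q. Then a_i e^N = α^N e^N a_i. -/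
/- STATEMENT 16: Let `k` be a field, `q ∈ k` of order `N ≥ 2`, and `A` a `k`-algebra with
elements `a_i`, `e`, an invertible element `g`, and `e'` such that
`a_i e = α e a_i + λ(1 - q⁻¹) e'` and `e' e = β e e'` with `α = β q`.
Then `a_i e^N = α^N e^N a_i`. -/

theorem root_vector_Nth_power_commute {k : Type*} [Field k] {A : Type*} [Ring A] [Algebra k A]
    (N : ℕ) (hN : 2 ≤ N) (q : k) (hq : orderOf q = N)
    (α β lam : k) (ai e e' g : A) (hg : IsUnit g)
    (hαβ : α = β * q)
    (hae : ai * e = α • (e * ai) + (lam * (1 - q⁻¹)) • e')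
    (hee : e' * e = β • (e * e')) :
    ai * e ^ N = α ^ N • (e ^ N * ai) := by
  set c : k := lam * (1 - q⁻¹) with hc
  have key : ∀ n : ℕ, ai * e ^ (n + 1) =
      α ^ (n + 1) • (e ^ (n + 1) * ai) +
        (c * ∑ m ∈ Finset.range (n + 1), α ^ m * β ^ (n - m)) • (e ^ n * e') := by
    intro n
    induction n with
    | zero => simpa using hae
    | succ n ih =>
      have h1 : ai * e ^ (n + 2) = (ai * e ^ (n + 1)) * e := by
        rw [pow_succ, mul_assoc]
      rw [h1, ih, add_mul, smul_mul_assoc, smul_mul_assoc, mul_assoc, mul_assoc (e ^ n), hae, hee]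
      have hsum : ∑ m ∈ Finset.range (n + 2), α ^ m * β ^ (n + 1 - m) =
          α ^ (n + 1) + β * ∑ m ∈ Finset.range (n + 1), α ^ m * β ^ (n - m) := by
        rw [Finset.sum_range_succ, Finset.mul_sum]
        have : ∀ m ∈ Finset.range (n + 1),
            α ^ m * β ^ (n + 1 - m) = β * (α ^ m * β ^ (n - m)) := by
          intro m hm
          have hm' : m ≤ n := Nat.lt_succ_iff.mp (Finset.mem_range.mp hm)
          rw [Nat.succ_sub hm', pow_succ]
          ring
        rw [Finset.sum_congr rfl this]
        simp [add_comm]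
      rw [hsum]
      have hea : e ^ (n + 1) * (α • (e * ai) + c • e') =
          α • (e ^ (n + 2) * ai) + c • (e ^ (n + 1) * e') := by
        rw [mul_add, mul_smul_comm, mul_smul_comm, ← mul_assoc, ← pow_succ]
      rw [hea]
      rw [mul_smul_comm]
      rw [smul_add, smul_smul, smul_smul, smul_smul]
      rw [← mul_assoc (e ^ n), ← pow_succ, ← pow_succ e n]
      rw [add_assoc, ← add_smul]
      congr 2
      ring
  obtain ⟨M, hM⟩ : ∃ M, N = M + 1 := ⟨N - 1, by omega⟩
  have hq1 : q ≠ 1 := by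
    intro h
    rw [h, orderOf_one] at hq
    omega
  have hqN : q ^ N = 1 := hq ▸ pow_orderOf_eq_one q
  have hgeom : ∑ m ∈ Finset.range N, q ^ m = 0 := by
    have := geom_sum_eq hq1 N
    rw [this, hqN, sub_self, zero_div]
  have hS : ∑ m ∈ Finset.range (M + 1), α ^ m * β ^ (M - m) = 0 := by
    have : ∀ m ∈ Finset.range (M + 1), α ^ m * β ^ (M - m) = β ^ M * q ^ m := by
      intro m hm
      have hm' : m ≤ M := Nat.lt_succ_iff.mp (Finset.mem_range.mp hm)
      rw [hαβ, mul_pow, mul_assoc, mul_comm (β ^ m), mul_assoc, ← pow_add]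
      rw [Nat.sub_add_cancel hm', mul_comm]
    rw [Finset.sum_congr rfl this, ← Finset.mul_sum, ← hM, hgeom, mul_zero]
  rw [hM, key M, hS, mul_zero, zero_smul, add_zero]
end
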